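/- In the stack machine with jumps, the buggy Jump rule that does not raise the pc label (setting pc := n with the old pc label when jumping to n@ℓn) violates end-to-end noninterference via an implicit flow: there exist two indistinguishable initial states that both halt in distinguishable final states. -/
import Mathlib


/-- The two-point label lattice: `L` (low/public) and `H` (high/secret). -/
inductive Lab where
  | L
  | H
deriving DecidableEq

/-- `L ⊑ H`; the flows-to ordering. -/
def Lab.flows : Lab → Lab → Prop
  | .H, .L => False
  | _, _ => True

/-- Join (least upper bound) of two labels. -/
def Lab.join : Lab → Lab → Lab
  | .L, .L => .L
  | _, _ => .H

/-- A labeled integer `n@ℓ`. -/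
structure LInt where
  val : Int
  lab : Lab
deriving DecidableEq

/-- Instructions of the stack machine with jumps. -/
inductive Instr where
  | Push (v : LInt)
  | Pop
  | Load
  | Store
  | Add
  | Noop
  | Halt
  | Jump
deriving DecidableEq

/-- Lookup a list at an integer index. -/
def getI {α : Type} (xs : List α) (i : Int) : Option α :=
  if 0 ≤ i then xs[i.toNat]? else none

/-- Update a list at an integer index. -/
def setI {α : Type} (xs : List α) (i : Int) (a : α) : List α :=
  if 0 ≤ i then xs.set i.toNat a else xs

/-- A machine state: a labeled program counter, stack, data memory, and
instruction memory. -/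
structure St where
  pc : LInt
  stk : List LInt
  mem : List LInt
  imem : List Instr

/-- The step relation for the stack machine with jumps, where all rules are
correct (in particular `Store` performs the no-sensitive-upgrades check
including the pc label and taints with the pc label) except the buggy
`Jump` rule, which does not raise the pc label. -/
inductive Step : St → St → Prop where
  | noop {pc ℓpc s m i} :
      getI i pc = some .Noop →
      Step ⟨⟨pc, ℓpc⟩, s, m, i⟩ ⟨⟨pc + 1, ℓpc⟩, s, m, i⟩
  | push {pc ℓpc s m i v} :
      getI i pc = some (.Push v) →
      Step ⟨⟨pc, ℓpc⟩, s, m, i⟩ ⟨⟨pc + 1, ℓpc⟩, v :: s, m, i⟩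
  | pop {pc ℓpc v s m i} :
      getI i pc = some .Pop →
      Step ⟨⟨pc, ℓpc⟩, v :: s, m, i⟩ ⟨⟨pc + 1, ℓpc⟩, s, m, i⟩
  | load {pc ℓpc p ℓp s m i n ℓn} :
      getI i pc = some .Load →
      getI m p = some ⟨n, ℓn⟩ →
      Step ⟨⟨pc, ℓpc⟩, ⟨p, ℓp⟩ :: s, m, i⟩
           ⟨⟨pc + 1, ℓpc⟩, ⟨n, ℓn.join ℓp⟩ :: s, m, i⟩
  | store {pc ℓpc p ℓp n ℓn s m i n' ℓn'} :
      getI i pc = some .Store →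
      getI m p = some ⟨n', ℓn'⟩ →
      (ℓp.join ℓpc).flows ℓn' →
      Step ⟨⟨pc, ℓpc⟩, ⟨p, ℓp⟩ :: ⟨n, ℓn⟩ :: s, m, i⟩
           ⟨⟨pc + 1, ℓpc⟩, s, setI m p ⟨n, (ℓn.join ℓp).join ℓpc⟩, i⟩
  | add {pc ℓpc n1 ℓ1 n2 ℓ2 s m i} :
      getI i pc = some .Add →
      Step ⟨⟨pc, ℓpc⟩, ⟨n1, ℓ1⟩ :: ⟨n2, ℓ2⟩ :: s, m, i⟩
           ⟨⟨pc + 1, ℓpc⟩, ⟨n1 + n2, ℓ1.join ℓ2⟩ :: s, m, i⟩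
  | jumpBuggy {pc ℓpc n ℓn s m i} :
      getI i pc = some .Jump →
      Step ⟨⟨pc, ℓpc⟩, ⟨n, ℓn⟩ :: s, m, i⟩ ⟨⟨n, ℓpc⟩, s, m, i⟩

/-- Indistinguishability of labeled integers. -/
def LInt.indist (a b : LInt) : Prop :=
  (a.lab = Lab.H ∧ b.lab = Lab.H) ∨ (a.val = b.val ∧ a.lab = Lab.L ∧ b.lab = Lab.L)

/-- Indistinguishability of instructions. -/
def Instr.indist : Instr → Instr → Prop
  | .Push a, .Push b => LInt.indist a b
  | i1, i2 => i1 = i2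

/-- Pointwise lifting of a relation to lists. -/
def ListIndist {α : Type} (R : α → α → Prop) (xs ys : List α) : Prop :=
  xs.length = ys.length ∧
  ∀ j (h1 : j < xs.length) (h2 : j < ys.length),
    R (xs.get ⟨j, h1⟩) (ys.get ⟨j, h2⟩)

/-- Memory-indistinguishability of states: either both pc labels are `H`, or
both are `L` and the data and instruction memories are pointwise
indistinguishable. -/
def IndistMem (S1 S2 : St) : Prop :=
  (S1.pc.lab = Lab.H ∧ S2.pc.lab = Lab.H) ∨
  (S1.pc.lab = Lab.L ∧ S2.pc.lab = Lab.L ∧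
    ListIndist LInt.indist S1.mem S2.mem ∧
    ListIndist Instr.indist S1.imem S2.imem)

/-- Initial states: `pc = 0@L`, empty stack, all-`0@L` memory. -/
def Initial (S : St) : Prop :=
  S.pc = (⟨0, Lab.L⟩ : LInt) ∧ S.stk = [] ∧ ∀ v ∈ S.mem, v = (⟨0, Lab.L⟩ : LInt)

/-- A halted state. -/
def Halted (S : St) : Prop := getI S.imem S.pc.val = some .Halt

/-- Multi-step execution. -/
def Exec : St → St → Prop := Relation.ReflTransGen Step

/-- A stuck state. -/
def Stuck (S : St) : Prop := ∀ S', ¬ Step S S'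


def prog (a : Int) : List Instr :=
  [.Push ⟨a, .H⟩, .Jump, .Push ⟨1, .L⟩, .Push ⟨0, .L⟩, .Store, .Halt, .Halt]

lemma stuckHalt {pc ℓpc s m i} (h : getI i pc = some Instr.Halt) :
    Stuck ⟨⟨pc, ℓpc⟩, s, m, i⟩ := by
  intro S' hs
  cases hs <;> simp_all

/-- The buggy `Jump` rule that does not raise the pc label violates
end-to-end noninterference via an implicit flow. -/
theorem eeni_violation_jump :
    ∃ S1 S2 S1' S2' : St,
      Initial S1 ∧ Initial S2 ∧ IndistMem S1 S2 ∧
      Exec S1 S1' ∧ Stuck S1' ∧ Halted S1' ∧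
      Exec S2 S2' ∧ Stuck S2' ∧ Halted S2' ∧
      ¬ IndistMem S1' S2' := by
  refine ⟨⟨⟨0, .L⟩, [], [⟨0, .L⟩], prog 2⟩, ⟨⟨0, .L⟩, [], [⟨0, .L⟩], prog 6⟩,
    ⟨⟨5, .L⟩, [], [⟨1, .L⟩], prog 2⟩, ⟨⟨6, .L⟩, [], [⟨0, .L⟩], prog 6⟩,
    ⟨rfl, rfl, by simp⟩, ⟨rfl, rfl, by simp⟩, ?_, ?_, ?_, ?_, ?_, ?_, ?_, ?_⟩
  · right
    refine ⟨rfl, rfl, ⟨rfl, ?_⟩, ⟨rfl, ?_⟩⟩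
    · intro j h1 h2
      simp only [List.length_cons, List.length_nil] at h1
      interval_cases j
      · exact Or.inr ⟨rfl, rfl, rfl⟩
    · intro j h1 h2
      simp only [prog, List.length_cons, List.length_nil] at h1
      interval_cases j <;>
        first
        | exact rfl
        | exact Or.inl ⟨rfl, rfl⟩
        | exact Or.inr ⟨rfl, rfl, rfl⟩
  · refine Relation.ReflTransGen.head (Step.push (v := ⟨2, .H⟩) (by decide)) ?_
    refine Relation.ReflTransGen.head (Step.jumpBuggy (by decide)) ?_
    refine Relation.ReflTransGen.head (Step.push (v := ⟨1, .L⟩) (by decide)) ?_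
    refine Relation.ReflTransGen.head (Step.push (v := ⟨0, .L⟩) (by decide)) ?_
    refine Relation.ReflTransGen.head (Step.store (n' := 0) (ℓn' := .L) (by decide) (by decide) trivial) ?_
    exact Relation.ReflTransGen.refl
  · exact stuckHalt (by decide)
  · exact (by decide : getI (prog 2) 5 = some Instr.Halt)
  · refine Relation.ReflTransGen.head (Step.push (v := ⟨6, .H⟩) (by decide)) ?_
    refine Relation.ReflTransGen.head (Step.jumpBuggy (by decide)) ?_
    exact Relation.ReflTransGen.refl
  · exact stuckHalt (by decide)
  · exact (by decide : getI (prog 6) 6 = some Instr.Halt)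
  · intro h
    rcases h with ⟨h, _⟩ | ⟨_, _, ⟨_, hm⟩, _⟩
    · exact absurd h (by decide)
    · have := hm 0 (by simp) (by simp)
      simp [LInt.indist] at this
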